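/- Let Q: ℝ³ → ℝ^{3×3} be a smooth symmetric traceless matrix field, and define T_{ij}(Q) = ε^{ikl} ∂_k Q_{lj} + ε^{jkl} ∂_k Q_{li} (summation convention). Then pointwise |∇Q|² = (3/2)|∇·Q|² + (1/4)|T(Q)|² + (∂_k Q_{li} ∂_l Q_{ki} - ∂_k Q_{ki} ∂_l Q_{li}), where |∇Q|² = Σ_{i,j,k} (∂_k Q_{ij})², (∇·Q)_j = ∂_i Q_{ij}, and |T(Q)|² = Σ_{i,j} T_{ij}(Q)². -/

import Mathlib

/-- The Levi-Civita symbol on `{0,1,2}`. -/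
noncomputable def leviCivita (i j k : Fin 3) : ℝ :=
  (((j.val : ℝ) - i.val) * ((k.val : ℝ) - i.val) * ((k.val : ℝ) - j.val)) / 2

/-- Partial derivative `∂_k f` of a scalar field on `ℝ³`. -/
noncomputable def pd (k : Fin 3) (f : (Fin 3 → ℝ) → ℝ) (x : Fin 3 → ℝ) : ℝ :=
  fderiv ℝ f x (Pi.single k 1)

theorem stmt9 (Q : (Fin 3 → ℝ) → Matrix (Fin 3) (Fin 3) ℝ)
    (hsmooth : ∀ i j, ContDiff ℝ (⊤ : ℕ∞) (fun x => Q x i j))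
    (hsymm : ∀ x, (Q x).IsSymm) (htrace : ∀ x, (Q x).trace = 0) :
    ∀ x : Fin 3 → ℝ,
      (∑ i : Fin 3, ∑ j : Fin 3, ∑ k : Fin 3, (pd k (fun y => Q y i j) x) ^ 2) =
        3 / 2 * ∑ j : Fin 3, (∑ i : Fin 3, pd i (fun y => Q y i j) x) ^ 2 +
        1 / 4 * ∑ i : Fin 3, ∑ j : Fin 3,
          ((∑ k : Fin 3, ∑ l : Fin 3, leviCivita i k l * pd k (fun y => Q y l j) x) +
            ∑ k : Fin 3, ∑ l : Fin 3, leviCivita j k l * pd k (fun y => Q y l i) x) ^ 2 +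
        ((∑ i : Fin 3, ∑ k : Fin 3, ∑ l : Fin 3,
            pd k (fun y => Q y l i) x * pd l (fun y => Q y k i) x) -
          ∑ i : Fin 3, ∑ k : Fin 3, ∑ l : Fin 3,
            pd k (fun y => Q y k i) x * pd l (fun y => Q y l i) x) := by
  intro x
  have hdiff : ∀ i j, DifferentiableAt ℝ (fun y => Q y i j) x := fun i j =>
    ((hsmooth i j).differentiable (by simp)).differentiableAt
  have hsym : ∀ i j k, pd k (fun y => Q y j i) x = pd k (fun y => Q y i j) x := by
    intro i j k
    have h : (fun y => Q y j i) = (fun y => Q y i j) := by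
      funext y
      exact (hsymm y).apply i j
    rw [h]
  have htr : ∀ k : Fin 3, pd k (fun y => Q y 2 2) x
      = -(pd k (fun y => Q y 0 0) x + pd k (fun y => Q y 1 1) x) := by
    intro k
    have hfun : (fun y => Q y 2 2) =
        (fun y => (0 : ℝ) - Q y 0 0 - Q y 1 1) := by
      funext y
      have := htrace y
      simp [Matrix.trace, Matrix.diag, Fin.sum_univ_three] at this
      linarith
    have h0 : pd k (fun y => Q y 2 2) x
        = pd k (fun y => (0 : ℝ) - Q y 0 0 - Q y 1 1) x := by rw [hfun]
    rw [h0]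
    unfold pd
    rw [fderiv_fun_sub (by fun_prop) (hdiff 1 1), fderiv_fun_sub (by fun_prop) (hdiff 0 0)]
    simp [pd]
    ring
  simp only [Fin.sum_univ_three]
  simp only [hsym 0 1, hsym 0 2, hsym 1 2, htr]
  norm_num [leviCivita]
  ring
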